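/- Let A₁, A₂ ⊆ E be nonempty finite sets, let λ ≥ 0, and let (Z, ξ) be a global Carathéodory solution of the inclusion Ż_τ ∈ −(1/4)·G_λ(Z_τ). Then for all 0 ≤ a ≤ b < ∞, Φ_λ(Z_b) − Φ_λ(Z_a) = −4·∫_a^b ‖ξ_τ‖² dτ. In particular, τ ↦ Φ_λ(Z_τ) is nonincreasing on [0,∞). -/

import Mathlib

/-!
Along the absolutely continuous curve `Z`, each `t ↦ d_A(Z t)²` is absolutely continuous, hence
differentiable at almost every `τ`. At such a `τ`, for every nearest point `a` of `Z τ` in `A` the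
function `t ↦ ‖Z t - a‖² - d_A(Z t)²` is nonnegative and vanishes at `τ`, so its derivative
vanishes there: the derivative of `d_A(Z ·)²` at `τ` is `2⟪Z τ - a, Ż τ⟫` for every nearest point
`a`. Consequently `⟪g, Ż τ⟫ = (Φ_λ ∘ Z)'(τ)` for every generator `g` of `G_λ(Z τ)`, and by
convexity for every `g ∈ G_λ(Z τ)`. Taking `g = -4 Ż τ` gives `(Φ_λ ∘ Z)' = -4 ‖Ż‖²` almost
everywhere, and the fundamental theorem of calculus for absolutely continuous functions
integrates this identity.
-/

open MeasureTheory Metric Filter Topology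

/-- The set `Π_A(x)` of nearest points of `x` in `A`. -/
def nearestPts {d : ℕ} (A : Set (EuclideanSpace ℝ (Fin d)))
    (x : EuclideanSpace ℝ (Fin d)) : Set (EuclideanSpace ℝ (Fin d)) :=
  {a ∈ A | ‖x - a‖ = Metric.infDist x A}

/-- The geometric distance potential `Φ_λ(x) = λ d_{A₁}(x)² + (1-λ) d_{A₂}(x)²`. -/
noncomputable def distPotential {d : ℕ} (A₁ A₂ : Set (EuclideanSpace ℝ (Fin d))) (lam : ℝ)
    (x : EuclideanSpace ℝ (Fin d)) : ℝ :=
  lam * (Metric.infDist x A₁) ^ 2 + (1 - lam) * (Metric.infDist x A₂) ^ 2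

/-- The outer-Clarke field
`G_λ(z) = conv {2λ(z-a₁) + 2(1-λ)(z-a₂) : a₁ ∈ Π_{A₁}(z), a₂ ∈ Π_{A₂}(z)}`. -/
noncomputable def outerClarkeField {d : ℕ} (A₁ A₂ : Set (EuclideanSpace ℝ (Fin d))) (lam : ℝ)
    (z : EuclideanSpace ℝ (Fin d)) : Set (EuclideanSpace ℝ (Fin d)) :=
  convexHull ℝ
    (Set.image2 (fun a₁ a₂ => (2 * lam) • (z - a₁) + (2 * (1 - lam)) • (z - a₂))
      (nearestPts A₁ z) (nearestPts A₂ z))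

/-- `(Z, ξ)` is a global Carathéodory solution of `Ż_τ ∈ -(1/4)·G_λ(Z_τ)`. -/
def IsCaratheodorySolution {d : ℕ} (A₁ A₂ : Set (EuclideanSpace ℝ (Fin d))) (lam : ℝ)
    (Z ξ : ℝ → EuclideanSpace ℝ (Fin d)) : Prop :=
  MeasureTheory.LocallyIntegrableOn ξ (Set.Ici 0) MeasureTheory.volume ∧
  (∀ᵐ τ ∂(MeasureTheory.volume.restrict (Set.Ici (0 : ℝ))),
    ξ τ ∈ (fun v => -(4 : ℝ)⁻¹ • v) '' outerClarkeField A₁ A₂ lam (Z τ)) ∧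
  (∀ τ : ℝ, 0 ≤ τ → Z τ = Z 0 + ∫ s in (0 : ℝ)..τ, ξ s)

open Set RealInnerProductSpace

namespace AbsolutelyContinuousOnInterval

theorem of_dist_le_mul {X Y : Type*} [PseudoMetricSpace X] [PseudoMetricSpace Y]
    {f : ℝ → X} {g : ℝ → Y} {a b : ℝ} (K : ℝ) (hg : AbsolutelyContinuousOnInterval g a b)
    (hfg : ∀ s ∈ uIcc a b, ∀ t ∈ uIcc a b, dist (f s) (f t) ≤ K * dist (g s) (g t)) :
    AbsolutelyContinuousOnInterval f a b := by
  unfold AbsolutelyContinuousOnInterval at hg ⊢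
  refine squeeze_zero' (Eventually.of_forall fun _ ↦ Finset.sum_nonneg fun _ _ ↦ dist_nonneg)
    ?_ (by simpa using hg.const_mul K)
  rw [eventually_inf_principal]
  filter_upwards with E hE
  rw [Finset.mul_sum]
  exact Finset.sum_le_sum fun i hi ↦ hfg _ (hE.1 i hi).1 _ (hE.1 i hi).2

theorem infDist {X : Type*} [PseudoMetricSpace X] {f : ℝ → X} {a b : ℝ}
    (hf : AbsolutelyContinuousOnInterval f a b) (A : Set X) :
    AbsolutelyContinuousOnInterval (fun t ↦ infDist (f t) A) a b :=
  hf.of_dist_le_mul 1 fun s _ t _ ↦ by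
    simpa using (lipschitz_infDist_pt A).dist_le_mul (f s) (f t)

end AbsolutelyContinuousOnInterval

theorem IntervalIntegrable.absolutelyContinuousOnInterval_primitive {E : Type*}
    [NormedAddCommGroup E] [NormedSpace ℝ E] {f : ℝ → E} {a b c : ℝ}
    (hf : IntervalIntegrable f volume a b) (hc : c ∈ uIcc a b) :
    AbsolutelyContinuousOnInterval (fun x ↦ ∫ v in c..x, f v) a b := by
  refine (hf.norm.absolutelyContinuousOnInterval_intervalIntegral hc).of_dist_le_mul 1
    fun s hs t ht ↦ ?_
  have hint : ∀ {x y}, x ∈ uIcc a b → y ∈ uIcc a b → IntervalIntegrable f volume x y :=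
    fun hx hy ↦ hf.mono_set (uIcc_subset_uIcc hx hy)
  rw [dist_eq_norm, Real.dist_eq, one_mul,
    intervalIntegral.integral_interval_sub_left (hint hc hs) (hint hc ht),
    intervalIntegral.integral_interval_sub_left (hint hc hs).norm (hint hc ht).norm]
  exact intervalIntegral.norm_integral_le_abs_integral_norm

theorem ae_nonneg_of_forall_ae_uIcc_natCast {P : ℝ → Prop}
    (h : ∀ n : ℕ, ∀ᵐ τ, τ ∈ uIcc 0 (n : ℝ) → P τ) : ∀ᵐ τ, 0 ≤ τ → P τ := by
  filter_upwards [ae_all_iff.2 h] with τ hτ hpos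
  obtain ⟨n, hn⟩ := exists_nat_ge τ
  exact hτ n (by rw [uIcc_of_le (hpos.trans hn)]; exact ⟨hpos, hn⟩)

theorem eq_two_inner_of_hasDerivAt_infDist_sq {E : Type*} [NormedAddCommGroup E]
    [InnerProductSpace ℝ E] {γ : ℝ → E} {v a : E} {A : Set E} {D τ : ℝ}
    (hγ : HasDerivAt γ v τ) (hD : HasDerivAt (fun t ↦ infDist (γ t) A ^ 2) D τ)
    (ha : a ∈ A) (hnearest : ‖γ τ - a‖ = infDist (γ τ) A) :
    D = 2 * ⟪γ τ - a, v⟫ := by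
  have hmin : IsLocalMin (fun t ↦ ‖γ t - a‖ ^ 2 - infDist (γ t) A ^ 2) τ :=
    Eventually.of_forall fun t ↦ by
      have hle : infDist (γ t) A ≤ ‖γ t - a‖ := dist_eq_norm (γ t) a ▸ infDist_le_dist_of_mem ha
      simp only [hnearest, sub_self, sub_nonneg]
      exact pow_le_pow_left₀ infDist_nonneg hle 2
  linarith [hmin.hasDerivAt_eq_zero ((hγ.sub_const a).norm_sq.sub hD)]

theorem inner_eq_of_mem_outerClarkeField {d : ℕ} {A₁ A₂ : Set (EuclideanSpace ℝ (Fin d))}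
    {lam D₁ D₂ : ℝ} {z v w : EuclideanSpace ℝ (Fin d)}
    (h₁ : ∀ a ∈ nearestPts A₁ z, D₁ = 2 * ⟪z - a, v⟫)
    (h₂ : ∀ a ∈ nearestPts A₂ z, D₂ = 2 * ⟪z - a, v⟫)
    (hw : w ∈ outerClarkeField A₁ A₂ lam z) :
    ⟪w, v⟫ = lam * D₁ + (1 - lam) * D₂ := by
  have hlin : IsLinearMap ℝ fun w ↦ ⟪w, v⟫ :=
    ⟨fun x y ↦ inner_add_left x y v, fun c x ↦ real_inner_smul_left x v c⟩
  refine convexHull_min ?_ (convex_hyperplane hlin _) hw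
  rintro _ ⟨a₁, ha₁, a₂, ha₂, rfl⟩
  simp only [mem_ofPred_eq, inner_add_left, real_inner_smul_left, h₁ a₁ ha₁, h₂ a₂ ha₂]
  ring

theorem hasDerivAt_distPotential_comp {d : ℕ} {A₁ A₂ : Set (EuclideanSpace ℝ (Fin d))}
    {lam τ : ℝ} {Z : ℝ → EuclideanSpace ℝ (Fin d)} {v : EuclideanSpace ℝ (Fin d)}
    (hZ : HasDerivAt Z v τ)
    (h₁ : DifferentiableAt ℝ (fun t ↦ infDist (Z t) A₁ ^ 2) τ)
    (h₂ : DifferentiableAt ℝ (fun t ↦ infDist (Z t) A₂ ^ 2) τ)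
    (hv : v ∈ (fun w ↦ -(4 : ℝ)⁻¹ • w) '' outerClarkeField A₁ A₂ lam (Z τ)) :
    HasDerivAt (fun t ↦ distPotential A₁ A₂ lam (Z t)) (-4 * ‖v‖ ^ 2) τ := by
  obtain ⟨w, hw, rfl⟩ := hv
  have hinner := inner_eq_of_mem_outerClarkeField
    (fun a ha ↦ eq_two_inner_of_hasDerivAt_infDist_sq hZ h₁.hasDerivAt ha.1 ha.2)
    (fun a ha ↦ eq_two_inner_of_hasDerivAt_infDist_sq hZ h₂.hasDerivAt ha.1 ha.2) hw
  refine ((h₁.hasDerivAt.const_mul lam).add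
    (h₂.hasDerivAt.const_mul (1 - lam))).congr_deriv ?_
  rw [← hinner, norm_smul, real_inner_smul_right, real_inner_self_eq_norm_sq]
  norm_num
  ring

namespace IsCaratheodorySolution

variable {d : ℕ} {A₁ A₂ : Set (EuclideanSpace ℝ (Fin d))} {lam : ℝ}
  {Z ξ : ℝ → EuclideanSpace ℝ (Fin d)}

theorem intervalIntegrable (hsol : IsCaratheodorySolution A₁ A₂ lam Z ξ) {b : ℝ} (hb : 0 ≤ b) :
    IntervalIntegrable ξ volume 0 b :=
  (hsol.1.integrableOn_compact_subset (uIcc_of_le hb ▸ Icc_subset_Ici_self)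
    isCompact_uIcc).intervalIntegrable

theorem absolutelyContinuousOnInterval (hsol : IsCaratheodorySolution A₁ A₂ lam Z ξ) {b : ℝ}
    (hb : 0 ≤ b) : AbsolutelyContinuousOnInterval Z 0 b :=
  ((hsol.intervalIntegrable hb).absolutelyContinuousOnInterval_primitive
    left_mem_uIcc).of_dist_le_mul 1 fun s hs t ht ↦ by
      rw [uIcc_of_le hb] at hs ht
      rw [hsol.2.2 s hs.1, hsol.2.2 t ht.1, dist_add_left, one_mul]

theorem ae_hasDerivAt (hsol : IsCaratheodorySolution A₁ A₂ lam Z ξ) :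
    ∀ᵐ τ, 0 < τ → HasDerivAt Z (ξ τ) τ := by
  have h := ae_nonneg_of_forall_ae_uIcc_natCast fun n ↦
    ((hsol.intervalIntegrable (Nat.cast_nonneg n)).ae_hasDerivAt_integral).mono
      fun τ hτ hmem ↦ hτ hmem 0 left_mem_uIcc
  filter_upwards [h] with τ hτ hpos
  refine ((hτ hpos.le).const_add (Z 0)).congr_of_eventuallyEq ?_
  filter_upwards [Ioi_mem_nhds hpos] with t ht
  exact hsol.2.2 t (le_of_lt ht)

theorem ae_differentiableAt_infDist_sq (hsol : IsCaratheodorySolution A₁ A₂ lam Z ξ)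
    (A : Set (EuclideanSpace ℝ (Fin d))) :
    ∀ᵐ τ, 0 ≤ τ → DifferentiableAt ℝ (fun t ↦ infDist (Z t) A ^ 2) τ := by
  refine ae_nonneg_of_forall_ae_uIcc_natCast fun n ↦ ?_
  have hZ := hsol.absolutelyContinuousOnInterval (Nat.cast_nonneg n)
  simpa only [sq] using ((hZ.infDist A).fun_mul (hZ.infDist A)).ae_differentiableAt

theorem ae_hasDerivAt_distPotential (hsol : IsCaratheodorySolution A₁ A₂ lam Z ξ) :
    ∀ᵐ τ, 0 < τ →
      HasDerivAt (fun t ↦ distPotential A₁ A₂ lam (Z t)) (-4 * ‖ξ τ‖ ^ 2) τ := by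
  filter_upwards [hsol.ae_hasDerivAt, hsol.ae_differentiableAt_infDist_sq A₁,
    hsol.ae_differentiableAt_infDist_sq A₂, (ae_restrict_iff' measurableSet_Ici).1 hsol.2.1]
    with τ hZ h₁ h₂ hξ hτ
  exact hasDerivAt_distPotential_comp (hZ hτ) (h₁ hτ.le) (h₂ hτ.le) (hξ hτ.le)

theorem absolutelyContinuousOnInterval_distPotential
    (hsol : IsCaratheodorySolution A₁ A₂ lam Z ξ) {a b : ℝ} (ha : 0 ≤ a) (hab : a ≤ b) :
    AbsolutelyContinuousOnInterval (fun t ↦ distPotential A₁ A₂ lam (Z t)) a b := by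
  have hb := ha.trans hab
  have hZ := (hsol.absolutelyContinuousOnInterval hb).mono
    (uIcc_subset_uIcc (by rw [uIcc_of_le hb]; exact ⟨ha, hab⟩) right_mem_uIcc)
  have hD := fun A ↦ (hZ.infDist A).fun_mul (hZ.infDist A)
  simpa only [distPotential, sq] using
    ((hD A₁).const_mul lam).fun_add ((hD A₂).const_mul (1 - lam))

theorem distPotential_sub_eq (hsol : IsCaratheodorySolution A₁ A₂ lam Z ξ) {a b : ℝ}
    (ha : 0 ≤ a) (hab : a ≤ b) :
    distPotential A₁ A₂ lam (Z b) - distPotential A₁ A₂ lam (Z a) =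
      -4 * ∫ τ in a..b, ‖ξ τ‖ ^ 2 := by
  rw [← (hsol.absolutelyContinuousOnInterval_distPotential ha hab).integral_deriv_eq_sub,
    ← intervalIntegral.integral_const_mul]
  refine intervalIntegral.integral_congr_ae ?_
  filter_upwards [hsol.ae_hasDerivAt_distPotential] with τ hτ hmem
  exact (hτ (ha.trans_lt (uIoc_of_le hab ▸ hmem).1)).deriv

end IsCaratheodorySolution

theorem lyapunov_identity_along_caratheodory_solutions_general
    (d : ℕ)
    (A₁ A₂ : Set (EuclideanSpace ℝ (Fin d)))
    (lam : ℝ)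
    (Z ξ : ℝ → EuclideanSpace ℝ (Fin d))
    (hsol : IsCaratheodorySolution A₁ A₂ lam Z ξ) :
    (∀ a b : ℝ, 0 ≤ a → a ≤ b →
      distPotential A₁ A₂ lam (Z b) - distPotential A₁ A₂ lam (Z a) =
        -4 * ∫ τ in a..b, ‖ξ τ‖ ^ 2) ∧
    AntitoneOn (fun τ => distPotential A₁ A₂ lam (Z τ)) (Set.Ici 0) := by
  refine ⟨fun a b ha hab ↦ hsol.distPotential_sub_eq ha hab, fun s hs t _ hst ↦ ?_⟩
  have hsub := hsol.distPotential_sub_eq hs hst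
  have hint : 0 ≤ ∫ τ in s..t, ‖ξ τ‖ ^ 2 :=
    intervalIntegral.integral_nonneg hst fun _ _ ↦ by positivity
  linarith

theorem lyapunov_identity_along_caratheodory_solutions
    (d : ℕ) (hd : 1 ≤ d)
    (A₁ A₂ : Set (EuclideanSpace ℝ (Fin d)))
    (hA₁ : A₁.Nonempty) (hA₂ : A₂.Nonempty)
    (hA₁fin : A₁.Finite) (hA₂fin : A₂.Finite)
    (lam : ℝ) (hlam : 0 ≤ lam)
    (Z ξ : ℝ → EuclideanSpace ℝ (Fin d))
    (hsol : IsCaratheodorySolution A₁ A₂ lam Z ξ) :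
    (∀ a b : ℝ, 0 ≤ a → a ≤ b →
      distPotential A₁ A₂ lam (Z b) - distPotential A₁ A₂ lam (Z a) =
        -4 * ∫ τ in a..b, ‖ξ τ‖ ^ 2) ∧
    AntitoneOn (fun τ => distPotential A₁ A₂ lam (Z τ)) (Set.Ici 0) :=
  lyapunov_identity_along_caratheodory_solutions_general d A₁ A₂ lam Z ξ hsol
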